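/- arXiv:2312.13884 — 4 statements merged into one kernel-verified Lean document; each statement's English description precedes it below -/
import Mathlib

section
/- If I is a finite set of interventions with p̃(κ) > 0 for every κ ∈ I with κ ≠ id, then for every H ∈ σ^I(G) the infimum C(G,H) = inf{p(κ) : κ ∈ [I], κ(G) = H} is attained: there is a strategy κ ∈ [I] with κ(G) = H and p(κ) = C(G,H). -/
/-- `κ` is a finite composition of maps from `I` (including the identity). -/
def IsStrategy {G : Type*} (I : Set (G → G)) (κ : G → G) : Prop :=
  ∃ l : List (G → G), (∀ f ∈ l, f ∈ I) ∧ l.foldr (· ∘ ·) id = κ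

/-- `σ^I(g)`: the set of all elements obtainable from `g` by `I`-strategies. -/
def reach {G : Type*} (I : Set (G → G)) (g : G) : Set G :=
  {h | ∃ κ : G → G, IsStrategy I κ ∧ κ g = h}

/-- The price `p(κ)` of a strategy: the infimum of `∑ p̃(κᵢ)` over all
decompositions `κ = κₙ ∘ ⋯ ∘ κ₁` with `κᵢ ∈ I` (`inf ∅ = ∞` in `EReal`). -/
noncomputable def price {G : Type*} (ptilde : (G → G) → ℝ) (I : Set (G → G))
    (κ : G → G) : EReal :=
  sInf {x : EReal | ∃ l : List (G → G), (∀ f ∈ l, f ∈ I) ∧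
    l.foldr (· ∘ ·) id = κ ∧ x = ((l.map ptilde).sum : ℝ)}

/-- The monetary cost `C(g,h) = inf { p(κ) : κ ∈ [I], κ(g) = h }`. -/
noncomputable def cost {G : Type*} (ptilde : (G → G) → ℝ) (I : Set (G → G))
    (g h : G) : EReal :=
  sInf {x : EReal | ∃ κ : G → G, IsStrategy I κ ∧ κ g = h ∧ x = price ptilde I κ}

/-!
Identity steps cost nothing, so dropping them from a decomposition does not change its total.
Every other step costs at least the least price `ε > 0` of a nonidentity intervention in the finite
set `I`, so decompositions of total price at most `a` have length at most `a / ε`: below any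
bound there are only finitely many totals. Hence the totals of decompositions of strategies
sending `g` to `h` have a least element, and the strategy realizing it is optimal, because
`p(κ)` and `C(g,h)` are both infima of subsets of that set of totals.
-/

open Set

theorem Set.Finite.setOf_list_length_le {α : Type*} {J : Set α} (hJ : J.Finite) (n : ℕ) :
    {l : List α | (∀ x ∈ l, x ∈ J) ∧ l.length ≤ n}.Finite := by
  have : Finite J := hJ
  refine ((List.finite_length_le J n).image (List.map (↑))).subset ?_
  rintro l ⟨hlJ, hln⟩
  lift l to List J using hlJ
  exact ⟨l, by simpa using hln, rfl⟩

theorem Set.Finite.exists_pos_le_of_pos {α : Type*} {J : Set α} (hJ : J.Finite) {p : α → ℝ}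
    (hp : ∀ x ∈ J, 0 < p x) : ∃ ε > 0, ∀ x ∈ J, ε ≤ p x := by
  rcases J.eq_empty_or_nonempty with rfl | hne
  · exact ⟨1, one_pos, by simp⟩
  · obtain ⟨x₀, hx₀, hmin⟩ := Set.exists_min_image J p hJ hne
    exact ⟨p x₀, hp x₀ hx₀, hmin⟩

theorem List.length_mul_le_sum_map {α : Type*} {p : α → ℝ} {ε : ℝ} {l : List α}
    (h : ∀ x ∈ l, ε ≤ p x) : l.length * ε ≤ (l.map p).sum := by
  simpa using List.card_nsmul_le_sum (l.map p) ε (by simpa using h)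

theorem List.sum_map_filter_ne {α : Type*} [DecidableEq α] {p : α → ℝ} {a : α} (ha : p a = 0)
    (l : List α) : ((l.filter (· ≠ a)).map p).sum = (l.map p).sum := by
  induction l with
  | nil => rfl
  | cons x l ih => by_cases hx : x = a <;> simp_all

theorem finite_image_sum_map_inter_Iic {α : Type*} {J : Set α} (hJ : J.Finite) {p : α → ℝ}
    (hp : ∀ x ∈ J, 0 < p x) (a : ℝ) :
    ((fun l : List α => (l.map p).sum) '' {l | ∀ x ∈ l, x ∈ J} ∩ Iic a).Finite := by
  obtain ⟨ε, hε, hεp⟩ := hJ.exists_pos_le_of_pos hp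
  refine ((hJ.setOf_list_length_le ⌊a / ε⌋₊).image fun l => (l.map p).sum).subset ?_
  rintro _ ⟨⟨l, hlJ, rfl⟩, hla⟩
  refine ⟨l, ⟨hlJ, Nat.le_floor ?_⟩, rfl⟩
  rw [le_div_iff₀ hε]
  exact (List.length_mul_le_sum_map fun x hx => hεp x (hlJ x hx)).trans hla

theorem finite_image_sum_map_inter_Iic_of_map_id {G : Type*} {I : Set (G → G)} (hI : I.Finite)
    {p : (G → G) → ℝ} (hid : p id = 0) (hpos : ∀ f ∈ I, f ≠ id → 0 < p f) (a : ℝ) :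
    ((fun l : List (G → G) => (l.map p).sum) '' {l | ∀ f ∈ l, f ∈ I} ∩ Iic a).Finite := by
  classical
  refine (finite_image_sum_map_inter_Iic (hI.sdiff (t := {id})) (fun f hf => hpos f hf.1 hf.2)
    a).subset ?_
  rintro _ ⟨⟨l, hlI, rfl⟩, hla⟩
  refine ⟨⟨l.filter (· ≠ id), fun f hf => ?_, List.sum_map_filter_ne hid l⟩, hla⟩
  simp only [List.mem_filter, decide_eq_true_eq] at hf
  exact ⟨hlI f hf.1, hf.2⟩

theorem Set.exists_isLeast_of_finite_inter_Iic {α : Type*} [LinearOrder α] {s : Set α} {a : α}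
    (ha : a ∈ s) (hs : (s ∩ Iic a).Finite) : ∃ m, IsLeast s m := by
  obtain ⟨m, ⟨hms, hma⟩, hmin⟩ := Set.exists_min_image _ id hs ⟨a, ha, le_rfl⟩
  refine ⟨m, hms, fun x hx => ?_⟩
  rcases le_total x a with hxa | hax
  · exact hmin x ⟨hx, hxa⟩
  · exact hma.trans hax

section PriceCost

variable {G : Type*} {p : (G → G) → ℝ} {I : Set (G → G)}

theorem price_le_sum_map {l : List (G → G)} (hl : ∀ f ∈ l, f ∈ I) :
    price p I (l.foldr (· ∘ ·) id) ≤ ((l.map p).sum : ℝ) :=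
  sInf_le ⟨l, hl, rfl, rfl⟩

theorem le_price {m : EReal} {κ : G → G}
    (h : ∀ l : List (G → G), (∀ f ∈ l, f ∈ I) → l.foldr (· ∘ ·) id = κ →
      m ≤ ((l.map p).sum : ℝ)) :
    m ≤ price p I κ :=
  le_sInf <| by
    rintro _ ⟨l, hl, hlκ, rfl⟩
    exact h l hl hlκ

theorem cost_le_price {κ : G → G} (hκ : IsStrategy I κ) (g : G) :
    cost p I g (κ g) ≤ price p I κ :=
  sInf_le ⟨κ, hκ, rfl, rfl⟩

theorem le_cost {m : EReal} {g h : G}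
    (hm : ∀ κ, IsStrategy I κ → κ g = h → m ≤ price p I κ) : m ≤ cost p I g h :=
  le_sInf <| by
    rintro _ ⟨κ, hκ, hκg, rfl⟩
    exact hm κ hκ hκg

end PriceCost

theorem stmt_5_general {G : Type*} (I : Set (G → G)) (hfin : I.Finite)
    (ptilde : (G → G) → ℝ) (hid : ptilde id = 0)
    (hpos' : ∀ f ∈ I, f ≠ id → 0 < ptilde f)
    (g h : G) (hh : h ∈ reach I g) :
    ∃ κ : G → G, IsStrategy I κ ∧ κ g = h ∧
      price ptilde I κ = cost ptilde I g h := by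
  set sum : List (G → G) → ℝ := fun l => (l.map ptilde).sum
  set S := sum '' {l | (∀ f ∈ l, f ∈ I) ∧ l.foldr (· ∘ ·) id g = h}
  obtain ⟨-, ⟨l₀, hl₀, rfl⟩, hl₀g⟩ := hh
  obtain ⟨-, ⟨l, ⟨hl, hlg⟩, rfl⟩, hmin⟩ : ∃ m, IsLeast S m :=
    exists_isLeast_of_finite_inter_Iic ⟨l₀, ⟨hl₀, hl₀g⟩, rfl⟩
      ((finite_image_sum_map_inter_Iic_of_map_id hfin hid hpos' (sum l₀)).subset
        (inter_subset_inter_left _ (image_mono fun l hl => hl.1)))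
  have hmin_price : ∀ κ, κ g = h → (sum l : EReal) ≤ price ptilde I κ := fun κ hκg =>
    le_price fun l' hl' hl'κ => EReal.coe_le_coe_iff.2 (hmin ⟨l', ⟨hl', hl'κ ▸ hκg⟩, rfl⟩)
  refine ⟨l.foldr (· ∘ ·) id, ⟨l, hl, rfl⟩, hlg, le_antisymm ?_ ?_⟩
  · exact le_cost fun κ _ hκg => (price_le_sum_map hl).trans (hmin_price κ hκg)
  · exact hlg ▸ cost_le_price ⟨l, hl, rfl⟩ g

/-- If `I` is finite and every nonidentity intervention has a strictly
positive price, then for every `h ∈ σ^I(g)` there is an optimal strategy: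
some `κ ∈ [I]` with `κ(g) = h` and `p(κ) = C(g,h)`. -/
theorem stmt_5 {G : Type*} (I : Set (G → G)) (hfin : I.Finite)
    (ptilde : (G → G) → ℝ) (hpos : ∀ f ∈ I, 0 ≤ ptilde f) (hid : ptilde id = 0)
    (hpos' : ∀ f ∈ I, f ≠ id → 0 < ptilde f)
    (g h : G) (hh : h ∈ reach I g) :
    ∃ κ : G → G, IsStrategy I κ ∧ κ g = h ∧
      price ptilde I κ = cost ptilde I g h :=
  stmt_5_general I hfin ptilde hid hpos' g h hh
end

section
/- There exist finite directed graphs G and H, where H arises from G by a node splitting (adding a new node ṽ and rerouting a nonempty proper subset of the edges incident to a node v to ṽ), such that the graph efficiency F(H) > F(G). In other words, graph efficiency based on shortest paths is not monotonically non-increasing under node splitting. -/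
open scoped ENNReal

/-- There is a directed walk of length `n` from `v` to `w` using edges of `E`. -/
def HasWalk {V : Type*} (E : Finset (V × V)) (v w : V) (n : ℕ) : Prop :=
  ∃ f : Fin (n + 1) → V, f 0 = v ∧ f (Fin.last n) = w ∧
    ∀ i : Fin n, (f i.castSucc, f i.succ) ∈ E

/-- The shortest directed path length from `v` to `w` (`∞` if there is no path). -/
noncomputable def ddist {V : Type*} (E : Finset (V × V)) (v w : V) : ℝ≥0∞ :=
  sInf {x : ℝ≥0∞ | ∃ n : ℕ, HasWalk E v w n ∧ x = n}

/-- Graph efficiency `F(G) = (1/(N(N-1))) ∑_{v ≠ w} 1 / l_{vw}`, with `1/∞ = 0`. -/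
noncomputable def graphEff (V : Type*) [Fintype V] [DecidableEq V]
    (E : Finset (V × V)) : ℝ≥0∞ :=
  ((Fintype.card V : ℝ≥0∞) * ((Fintype.card V : ℝ≥0∞) - 1))⁻¹ *
    ∑ v : V, ∑ w : V, if v ≠ w then (ddist E v w)⁻¹ else 0

/-- Splitting of node `v`: a new node (`none`) is added, and every edge of `E`
in `L` that leaves `v` is rerouted to leave the new node, every edge of `E`
in `L` that enters `v` is rerouted to enter the new node. -/
def splitEdges {V : Type*} [DecidableEq V] (E L : Finset (V × V)) (v : V) :
    Finset (Option V × Option V) :=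
  E.image fun e =>
    if e ∈ L ∧ e.1 = v then (none, some e.2)
    else if e ∈ L ∧ e.2 = v then (some e.1, none)
    else (some e.1, some e.2)

/-- The node split of `v` in `(V, E)` along `L` strictly increases graph
efficiency. -/
def SplitIncreasesEff (V : Type) [Fintype V] [DecidableEq V]
    (E L : Finset (V × V)) (v : V) : Prop :=
  graphEff V E < graphEff (Option V) (splitEdges E L v)

/-!
In a triangle with `N - 3` isolated nodes only the six ordered pairs of triangle vertices are
at finite distance, so `F(G) ≤ 6 / (N (N - 1))`. Splitting node `1` along the side `1 — 2`
turns the triangle into the path `1 — 0 — 2 — 1̃`, whose ordered pairs alone contribute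
`2 (3 + 2/2 + 1/3) = 26/3`, so `F(H) ≥ (26/3) / ((N + 1) N)`. For `N = 6` this gives
`F(G) ≤ 1/5 < 13/63 ≤ F(H)`.
-/

namespace HasWalk

variable {V : Type*} {E : Finset (V × V)}

theorem reverse (hE : ∀ a b, (a, b) ∈ E → (b, a) ∈ E) {v w : V} {n : ℕ}
    (h : HasWalk E v w n) : HasWalk E w v n := by
  obtain ⟨f, hv, hw, hf⟩ := h
  refine ⟨f ∘ Fin.rev, by simpa using hw, by simpa using hv, fun i => ?_⟩
  simpa [Fin.rev_castSucc, Fin.rev_succ] using hE _ _ (hf i.rev)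

theorem of_path {k : ℕ} {p : Fin (k + 1) → V} (hp : ∀ i : Fin k, (p i.castSucc, p i.succ) ∈ E)
    {i j : Fin (k + 1)} (hij : i ≤ j) : HasWalk E (p i) (p j) (j - i) := by
  refine ⟨fun t => p ⟨i + t, by omega⟩, rfl, congrArg p (Fin.ext (by simp; omega)), fun t => ?_⟩
  convert hp ⟨i + t, by omega⟩ using 3 <;> exact Fin.ext (by simp [add_assoc])

theorem of_path_dist (hE : ∀ a b, (a, b) ∈ E → (b, a) ∈ E) {k : ℕ} {p : Fin (k + 1) → V}
    (hp : ∀ i : Fin k, (p i.castSucc, p i.succ) ∈ E) (i j : Fin (k + 1)) :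
    HasWalk E (p i) (p j) (Nat.dist i j) := by
  rcases le_total i j with hij | hji
  · simpa [Nat.dist, Nat.sub_eq_zero_of_le (Fin.le_iff_val_le_val.mp hij)] using of_path hp hij
  · simpa [Nat.dist, Nat.sub_eq_zero_of_le (Fin.le_iff_val_le_val.mp hji)] using
      (of_path hp hji).reverse hE

theorem mem_of_subset_product {v w : V} {S : Finset V} (hES : E ⊆ S ×ˢ S) {n : ℕ}
    (h : HasWalk E v w (n + 1)) : v ∈ S ∧ w ∈ S := by
  obtain ⟨f, hv, hw, hf⟩ := h
  refine ⟨?_, ?_⟩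
  · simpa [hv] using (Finset.mem_product.mp (hES (hf 0))).1
  · simpa [hw] using (Finset.mem_product.mp (hES (hf (Fin.last n)))).2

end HasWalk

section Distance

variable {V : Type*} {E : Finset (V × V)} {v w : V}

theorem ddist_le_of_hasWalk {n : ℕ} (h : HasWalk E v w n) : ddist E v w ≤ n :=
  sInf_le ⟨n, h, rfl⟩

theorem one_le_ddist (hvw : v ≠ w) : 1 ≤ ddist E v w := by
  refine le_sInf ?_
  rintro _ ⟨_ | n, ⟨f, hv, hw, -⟩, rfl⟩
  · exact absurd (hv.symm.trans hw) hvw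
  · exact_mod_cast n.succ_pos

theorem ddist_eq_top_of_subset_product {S : Finset V} (hES : E ⊆ S ×ˢ S) (hvw : v ≠ w)
    (hS : v ∉ S ∨ w ∉ S) : ddist E v w = ⊤ := by
  refine sInf_eq_top.mpr ?_
  rintro _ ⟨_ | n, h, rfl⟩
  · obtain ⟨f, hv, hw, -⟩ := h
    exact absurd (hv.symm.trans hw) hvw
  · obtain ⟨hv, hw⟩ := h.mem_of_subset_product hES
    exact absurd hS (by simp [hv, hw])

end Distance

noncomputable def effSum (V : Type*) [Fintype V] [DecidableEq V] (E : Finset (V × V)) : ℝ≥0∞ :=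
  ∑ v : V, ∑ w : V, if v ≠ w then (ddist E v w)⁻¹ else 0

theorem graphEff_eq_of_card_eq_succ {V : Type*} [Fintype V] [DecidableEq V]
    (E : Finset (V × V)) {n : ℕ} (hV : Fintype.card V = n + 1) :
    graphEff V E = (((n + 1) * n : ℕ) : ℝ≥0∞)⁻¹ * effSum V E := by
  rw [graphEff, hV]
  push_cast
  rw [ENNReal.add_sub_cancel_right ENNReal.one_ne_top, effSum]

section EffSum

variable {V : Type*} [Fintype V] [DecidableEq V] {E : Finset (V × V)}

theorem effSum_le_card_offDiag {S : Finset V} (hES : E ⊆ S ×ˢ S) :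
    effSum V E ≤ S.offDiag.card := by
  calc effSum V E ≤ ∑ v : V, ∑ w : V, if (v, w) ∈ S.offDiag then 1 else 0 := by
        refine Finset.sum_le_sum fun v _ => Finset.sum_le_sum fun w _ => ?_
        by_cases hvw : v = w
        · simp [hvw]
        by_cases hS : v ∈ S ∧ w ∈ S
        · simpa [hvw, hS] using ENNReal.inv_le_one.mpr (one_le_ddist hvw)
        · rw [ddist_eq_top_of_subset_product hES hvw (not_and_or.mp hS)]
          simp
    _ = S.offDiag.card := by
        rw [← Fintype.sum_prod_type', Finset.sum_boole, Finset.filter_univ_mem]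

theorem sum_inv_dist_le_effSum (hE : ∀ a b, (a, b) ∈ E → (b, a) ∈ E) {k : ℕ}
    {p : Fin (k + 1) → V} (hp : ∀ i : Fin k, (p i.castSucc, p i.succ) ∈ E)
    (hinj : Function.Injective p) :
    ∑ i : Fin (k + 1), ∑ j : Fin (k + 1), (if i ≠ j then ((Nat.dist i j : ℕ) : ℝ≥0∞)⁻¹ else 0)
      ≤ effSum V E := by
  set g : V × V → ℝ≥0∞ := fun x => if x.1 ≠ x.2 then (ddist E x.1 x.2)⁻¹ else 0
  calc _ ≤ ∑ x : Fin (k + 1) × Fin (k + 1), g (Prod.map p p x) := by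
        rw [← Fintype.sum_prod_type']
        refine Finset.sum_le_sum fun x _ => ?_
        by_cases hx : x.1 = x.2
        · simp [hx]
        · simpa [g, hx, hinj.ne hx] using
            ENNReal.inv_le_inv.mpr (ddist_le_of_hasWalk (HasWalk.of_path_dist hE hp x.1 x.2))
    _ = ∑ y ∈ Finset.univ.image (Prod.map p p), g y :=
        (Finset.sum_image fun x _ y _ h => (hinj.prodMap hinj) h).symm
    _ ≤ ∑ y, g y := Finset.sum_le_univ_sum_of_nonneg fun _ => zero_le
    _ = effSum V E := Fintype.sum_prod_type' fun v w => g (v, w)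

end EffSum

theorem sum_inv_dist_fin_four :
    ∑ i : Fin 4, ∑ j : Fin 4, (if i ≠ j then ((Nat.dist i j : ℕ) : ℝ≥0∞)⁻¹ else 0) = 26 / 3 := by
  simp +decide only [Fin.sum_univ_four, Nat.dist, ne_eq, if_true, if_false,
    Fin.val_zero, Fin.val_one, Fin.val_two]
  norm_num
  rw [← ENNReal.toReal_eq_toReal_iff' (by finiteness) (by finiteness)]
  simp [ENNReal.toReal_add, ENNReal.toReal_inv, ENNReal.toReal_div]
  norm_num

def triangleEdges : Finset (Fin 6 × Fin 6) := {(0, 1), (1, 0), (0, 2), (2, 0), (1, 2), (2, 1)}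

def triangleSide : Finset (Fin 6 × Fin 6) := {(1, 2), (2, 1)}

theorem effSum_triangleEdges_le : effSum (Fin 6) triangleEdges ≤ 6 := by
  have h := effSum_le_card_offDiag (S := {0, 1, 2}) (E := triangleEdges) (by decide)
  rwa [show ({0, 1, 2} : Finset (Fin 6)).offDiag.card = 6 by decide] at h

theorem effSum_split_triangleEdges_ge :
    26 / 3 ≤ effSum (Option (Fin 6)) (splitEdges triangleEdges triangleSide 1) := by
  rw [← sum_inv_dist_fin_four]
  exact sum_inv_dist_le_effSum (p := ![some 1, some 0, some 2, none]) (by decide) (by decide)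
    (by decide)

/-- There is a finite directed graph and a node splitting (rerouting a
nonempty proper subset of the edges incident to a node `v` to a new node)
which strictly increases graph efficiency; i.e. shortest-path based graph
efficiency is not monotone under node splitting. -/
theorem stmt_7 :
    ∃ (V : Type) (instF : Fintype V) (instD : DecidableEq V)
      (E L : Finset (V × V)) (v : V),
      (∀ x : V, (x, x) ∉ E) ∧
      (∃ e ∈ E, e ∈ L ∧ (e.1 = v ∨ e.2 = v)) ∧
      (∃ e ∈ E, e ∉ L ∧ (e.1 = v ∨ e.2 = v)) ∧
      @SplitIncreasesEff V instF instD E L v := by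
  refine ⟨Fin 6, inferInstance, inferInstance, triangleEdges, triangleSide, 1, by decide,
    ⟨(1, 2), by decide, by decide, Or.inl rfl⟩, ⟨(0, 1), by decide, by decide, Or.inr rfl⟩, ?_⟩
  calc graphEff (Fin 6) triangleEdges ≤ (((5 + 1) * 5 : ℕ) : ℝ≥0∞)⁻¹ * 6 := by
        rw [graphEff_eq_of_card_eq_succ _ (Fintype.card_fin 6)]
        gcongr
        exact effSum_triangleEdges_le
    _ < (((6 + 1) * 6 : ℕ) : ℝ≥0∞)⁻¹ * (26 / 3) := by
        rw [← ENNReal.toReal_lt_toReal (by finiteness) (by finiteness)]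
        simp [ENNReal.toReal_inv, ENNReal.toReal_div]
        norm_num
    _ ≤ graphEff (Option (Fin 6)) (splitEdges triangleEdges triangleSide 1) := by
        rw [graphEff_eq_of_card_eq_succ (n := 6) _ (by simp)]
        gcongr
        exact effSum_split_triangleEdges_ge
end

section
/- Average total communicability F(G) = (1/|V_G|²) ∑_{v,w} (exp(A_G))_{vw} is strictly decreasing under node splitting: if G̃ results from a nontrivial node split of a node in G, then F(G̃) < F(G). -/
open Matrix

/-- Adjacency matrix (over `ℝ`) of the directed graph with edge set `E`. -/
def adjMat (V : Type*) [DecidableEq V] (E : Finset (V × V)) : Matrix V V ℝ :=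
  Matrix.of fun x y => if (x, y) ∈ E then 1 else 0

/-- Average total communicability
`F(G) = (1/|V|²) ∑_{v,w} (exp A_G)_{vw}`. -/
noncomputable def avgComm (V : Type*) [Fintype V] [DecidableEq V]
    (E : Finset (V × V)) : ℝ :=
  ((Fintype.card V : ℝ) ^ 2)⁻¹ *
    ∑ x : V, ∑ y : V, NormedSpace.exp (adjMat V E) x y

/-!
Let `M` be the 0–1 matrix that merges the new node back into `v`. Then `A_G = M A_G̃ Mᵀ`, and
since `M ≥ 0` and `MᵀM ≥ I` entrywise, induction gives `M A_G̃ᵏ Mᵀ ≤ A_Gᵏ` entrywise for `k ≥ 1`.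
The columns of `M` sum to one, so conjugation by `M` preserves the sum of all entries. Summing the
exponential series, the total communicability of `G̃` therefore exceeds that of `G` by at most the
difference `(|V| + 1) - |V| = 1` of the `k = 0` terms, while the normalisation grows from `|V|²`
to `(|V| + 1)²`; as the total communicability of `G` is at least `|V|`, the average drops.
-/

namespace Matrix

section OrderedSemiring

variable {l m n α : Type*} [Semiring α] [PartialOrder α] [IsOrderedRing α]

theorem mul_apply_nonneg [Fintype m] {A : Matrix l m α} {B : Matrix m n α}
    (hA : ∀ i j, 0 ≤ A i j) (hB : ∀ i j, 0 ≤ B i j) (i : l) (j : n) : 0 ≤ (A * B) i j :=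
  Finset.sum_nonneg fun k _ => mul_nonneg (hA i k) (hB k j)

theorem mul_apply_le_mul_apply [Fintype m] {A B : Matrix l m α} {C D : Matrix m n α}
    (hAB : ∀ i j, A i j ≤ B i j) (hCD : ∀ i j, C i j ≤ D i j)
    (hA : ∀ i j, 0 ≤ A i j) (hD : ∀ i j, 0 ≤ D i j) (i : l) (j : n) :
    (A * C) i j ≤ (B * D) i j :=
  Finset.sum_le_sum fun k _ =>
    (mul_le_mul_of_nonneg_left (hCD k j) (hA i k)).trans
      (mul_le_mul_of_nonneg_right (hAB i k) (hD k j))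

theorem mul_pow_succ_mul_transpose_apply_le {V W : Type*} [Fintype V] [DecidableEq V]
    [Fintype W] [DecidableEq W] {M : Matrix V W α} {B : Matrix W W α}
    (hM : ∀ x i, 0 ≤ M x i) (hMM : ∀ i j, (1 : Matrix W W α) i j ≤ (Mᵀ * M) i j)
    (hB : ∀ i j, 0 ≤ B i j) (k : ℕ) (x y : V) :
    (M * B ^ (k + 1) * Mᵀ) x y ≤ ((M * B * Mᵀ) ^ (k + 1)) x y := by
  have hMt : ∀ i x, 0 ≤ Mᵀ i x := fun i x => hM x i
  have hBMt : ∀ i x, 0 ≤ (B * Mᵀ) i x := mul_apply_nonneg hB hMt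
  induction k generalizing x y with
  | zero => simp
  | succ k ih =>
    have hinsert : ∀ i x, (B * Mᵀ) i x ≤ (Mᵀ * M * (B * Mᵀ)) i x := fun i x => by
      simpa using mul_apply_le_mul_apply hMM (fun _ _ => le_rfl)
        (fun i j => by rw [one_apply]; split_ifs <;> simp) hBMt i x
    calc (M * B ^ (k + 2) * Mᵀ) x y = (M * B ^ (k + 1) * (B * Mᵀ)) x y := by
          rw [pow_succ _ (k + 1)]; simp only [Matrix.mul_assoc]
      _ ≤ (M * B ^ (k + 1) * (Mᵀ * M * (B * Mᵀ))) x y :=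
          mul_apply_le_mul_apply (fun _ _ => le_rfl) hinsert
            (mul_apply_nonneg hM (pow_apply_nonneg hB _))
            (mul_apply_nonneg (mul_apply_nonneg hMt hM) hBMt) x y
      _ = (M * B ^ (k + 1) * Mᵀ * (M * B * Mᵀ)) x y := by simp only [Matrix.mul_assoc]
      _ ≤ ((M * B * Mᵀ) ^ (k + 1) * (M * B * Mᵀ)) x y :=
          mul_apply_le_mul_apply ih (fun _ _ => le_rfl)
            (mul_apply_nonneg (mul_apply_nonneg hM (pow_apply_nonneg hB _)) hMt)
            (mul_apply_nonneg (mul_apply_nonneg hM hB) hMt) x y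
      _ = ((M * B * Mᵀ) ^ (k + 2)) x y := by rw [pow_succ _ (k + 1)]

end OrderedSemiring

theorem sum_mul_mul_transpose_apply {V W α : Type*} [Fintype V] [Fintype W] [CommSemiring α]
    {M : Matrix V W α} (hM : ∀ i, ∑ x, M x i = 1) (C : Matrix W W α) :
    ∑ x, ∑ y, (M * C * Mᵀ) x y = ∑ i, ∑ j, C i j := by
  have hones : 1 ᵥ* M = 1 := funext fun i => by simp [vecMul, dotProduct, hM]
  calc ∑ x, ∑ y, (M * C * Mᵀ) x y = 1 ⬝ᵥ ((M * C * Mᵀ) *ᵥ 1) := by simp [dotProduct, mulVec]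
    _ = (1 ᵥ* M) ⬝ᵥ (C *ᵥ (Mᵀ *ᵥ 1)) := by
      rw [← mulVec_mulVec, ← mulVec_mulVec, dotProduct_mulVec]
    _ = 1 ⬝ᵥ (C *ᵥ 1) := by rw [mulVec_transpose, hones]
    _ = ∑ i, ∑ j, C i j := by simp [dotProduct, mulVec]

section Exp

variable {V : Type*} [Fintype V] [DecidableEq V]

theorem hasSum_exp (A : Matrix V V ℝ) :
    HasSum (fun k => (k.factorial : ℝ)⁻¹ • A ^ k) (NormedSpace.exp A) :=
  open scoped Norms.Operator in NormedSpace.exp_series_hasSum_exp' A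

theorem hasSum_sum_exp_apply (A : Matrix V V ℝ) :
    HasSum (fun k => (k.factorial : ℝ)⁻¹ * ∑ x, ∑ y, (A ^ k) x y)
      (∑ x, ∑ y, NormedSpace.exp A x y) := by
  have hentry x y := Pi.hasSum.mp (Pi.hasSum.mp (hasSum_exp A) x) y
  simp only [smul_apply, smul_eq_mul] at hentry
  simpa only [Finset.mul_sum] using hasSum_sum fun x _ => hasSum_sum fun y _ => hentry x y

theorem card_le_sum_exp_apply {A : Matrix V V ℝ} (hA : ∀ i j, 0 ≤ A i j) :
    (Fintype.card V : ℝ) ≤ ∑ x, ∑ y, NormedSpace.exp A x y := by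
  have h := le_hasSum (hasSum_sum_exp_apply A) 0 fun k _ =>
    mul_nonneg (by positivity) (Finset.sum_nonneg fun x _ => Finset.sum_nonneg fun y _ =>
      pow_apply_nonneg hA k x y)
  simpa [one_apply] using h

theorem sum_exp_apply_add_card_le {W : Type*} [Fintype W] [DecidableEq W]
    {M : Matrix V W ℝ} {B : Matrix W W ℝ}
    (hM : ∀ x i, 0 ≤ M x i) (hMM : ∀ i j, (1 : Matrix W W ℝ) i j ≤ (Mᵀ * M) i j)
    (hcol : ∀ i, ∑ x, M x i = 1) (hB : ∀ i j, 0 ≤ B i j) :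
    ∑ i, ∑ j, NormedSpace.exp B i j + Fintype.card V ≤
      ∑ x, ∑ y, NormedSpace.exp (M * B * Mᵀ) x y + Fintype.card W := by
  refine hasSum_le (fun k => ?_) ((hasSum_sum_exp_apply B).add (hasSum_ite_eq 0 _))
    ((hasSum_sum_exp_apply (M * B * Mᵀ)).add (hasSum_ite_eq 0 _))
  rcases k with _ | k
  · simp [one_apply, add_comm]
  · simp only [add_eq_zero, one_ne_zero, and_false, if_false, add_zero]
    rw [← sum_mul_mul_transpose_apply hcol]
    gcongr with x _ y _
    exact mul_pow_succ_mul_transpose_apply_le hM hMM hB k x y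

end Exp

end Matrix

theorem adjMat_nonneg {V : Type*} [DecidableEq V] (E : Finset (V × V)) (x y : V) :
    0 ≤ adjMat V E x y := by
  simp only [adjMat, of_apply]; split_ifs <;> norm_num

def mergeMatrix {V W : Type*} [DecidableEq V] (f : W → V) : Matrix V W ℝ :=
  Matrix.of fun x i => if f i = x then 1 else 0

section Merging

variable {V W : Type*} [DecidableEq V] (f : W → V)

theorem mergeMatrix_nonneg (x : V) (i : W) : 0 ≤ mergeMatrix f x i := by
  simp only [mergeMatrix, of_apply]; split_ifs <;> norm_num

theorem sum_mergeMatrix_apply [Fintype V] (i : W) : ∑ x, mergeMatrix f x i = 1 := by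
  simp [mergeMatrix]

theorem one_apply_le_transpose_mul_mergeMatrix [Fintype V] [DecidableEq W] (i j : W) :
    (1 : Matrix W W ℝ) i j ≤ ((mergeMatrix f)ᵀ * mergeMatrix f) i j := by
  rcases eq_or_ne i j with rfl | hij
  · simp [Matrix.mul_apply, mergeMatrix]
  · rw [Matrix.one_apply_ne hij]
    exact Matrix.mul_apply_nonneg (fun _ _ => mergeMatrix_nonneg f _ _) (mergeMatrix_nonneg f) i j

theorem mergeMatrix_mul_adjMat_mul_transpose [Fintype W] [DecidableEq W] (F : Finset (W × W))
    (hF : Set.InjOn (Prod.map f f) F) :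
    mergeMatrix f * adjMat W F * (mergeMatrix f)ᵀ = adjMat V (F.image (Prod.map f f)) := by
  ext x y
  have hrhs : adjMat V (F.image (Prod.map f f)) x y =
      ∑ p ∈ F, if (x, y) = Prod.map f f p then 1 else 0 := by
    calc adjMat V (F.image (Prod.map f f)) x y
        = ∑ q ∈ F.image (Prod.map f f), if (x, y) = q then 1 else 0 := by simp [adjMat]
      _ = _ := Finset.sum_image hF
  rw [hrhs]
  simp only [Matrix.mul_apply, transpose_apply, mergeMatrix, adjMat, of_apply]
  rw [← Finset.univ_inter F, ← Finset.sum_ite_mem, Fintype.sum_prod_type, Finset.sum_comm]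
  simp only [Finset.sum_mul]
  refine Finset.sum_congr rfl fun j _ => Finset.sum_congr rfl fun i _ => ?_
  by_cases hij : (i, j) ∈ F <;> simp [hij, Prod.ext_iff, eq_comm, ← ite_and, and_comm]

end Merging

theorem mergeMatrix_mul_adjMat_splitEdges_mul_transpose {V : Type*} [Fintype V] [DecidableEq V]
    (E L : Finset (V × V)) (v : V) :
    mergeMatrix (Option.getD · v) * adjMat (Option V) (splitEdges E L v) *
      (mergeMatrix (Option.getD · v))ᵀ = adjMat V E := by
  set g : Option V × Option V → V × V := Prod.map (Option.getD · v) (Option.getD · v)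
  obtain ⟨s, hsplit, hgs⟩ : ∃ s : V × V → Option V × Option V,
      splitEdges E L v = E.image s ∧ ∀ e, g (s e) = e :=
    ⟨_, rfl, fun ⟨a, b⟩ => by split_ifs <;> simp_all [g]⟩
  have hinj : Set.InjOn g (E.image s) := by
    rw [Finset.coe_image]
    rintro _ ⟨e, -, rfl⟩ _ ⟨e', -, rfl⟩ h
    rw [hgs, hgs] at h
    rw [h]
  rw [hsplit, mergeMatrix_mul_adjMat_mul_transpose _ _ hinj, Finset.image_image,
    show g ∘ s = id from funext hgs, Finset.image_id]

theorem stmt_9_general {V : Type*} [Fintype V] [DecidableEq V]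
    (E L : Finset (V × V)) (v : V) :
    avgComm (Option V) (splitEdges E L v) < avgComm V E := by
  have hmerge := Matrix.sum_exp_apply_add_card_le (mergeMatrix_nonneg (Option.getD · v))
    (one_apply_le_transpose_mul_mergeMatrix _) (sum_mergeMatrix_apply _)
    (adjMat_nonneg (splitEdges E L v))
  rw [mergeMatrix_mul_adjMat_splitEdges_mul_transpose, Fintype.card_option] at hmerge
  have hcard := Matrix.card_le_sum_exp_apply (adjMat_nonneg E)
  have hpos : (0 : ℝ) < Fintype.card V := by exact_mod_cast Fintype.card_pos_iff.mpr ⟨v⟩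
  rw [avgComm, avgComm, Fintype.card_option, ← div_eq_inv_mul, ← div_eq_inv_mul,
    div_lt_div_iff₀ (by positivity) (by positivity)]
  push_cast at hmerge ⊢
  nlinarith

/-- Average total communicability is strictly decreasing under a nontrivial
node splitting. -/
theorem stmt_9 {V : Type*} [Fintype V] [DecidableEq V]
    (E L : Finset (V × V)) (v : V) (hirr : ∀ x : V, (x, x) ∉ E)
    (hnontriv : ∃ e ∈ E, e ∈ L ∧ (e.1 = v ∨ e.2 = v)) :
    avgComm (Option V) (splitEdges E L v) < avgComm V E :=
  stmt_9_general E L v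
end

section
/- Among all undirected trees on N ≥ 2 vertices, the second moment of the degree distribution E[K²] = (1/N) ∑_v (deg v)² is minimized by the path (line) graph, whose value is (4N − 6)/N for N ≥ 2. -/
/-!
In a tree on `N` vertices the degrees sum to `2 (N - 1)`, so `∑ (3 d - 2) = 4 N - 6`.
Since `d² - (3 d - 2) = (d - 1) (d - 2) ≥ 0` for every natural `d`, with equality exactly
when `d ∈ {1, 2}`, the sum of squared degrees is at least `4 N - 6`, and the path,
all of whose degrees are `1` or `2`, attains this bound.
-/

/-- The degree of a vertex of a simple graph, as the number of its neighbors. -/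
noncomputable def sdeg {V : Type*} (G : SimpleGraph V) (v : V) : ℕ :=
  {w | G.Adj v w}.ncard

/-- Second moment `E[K²] = (1/N) ∑_v (deg v)²` of the degree distribution of
an undirected graph. -/
noncomputable def sndMomDeg (V : Type*) [Fintype V] (G : SimpleGraph V) : ℝ :=
  ((Fintype.card V : ℝ))⁻¹ * ∑ v : V, (sdeg G v : ℝ) ^ 2

open Finset

namespace SimpleGraph

section DegreeMoment

variable {V : Type*} [Fintype V] (G : SimpleGraph V) [DecidableRel G.Adj]

lemma sdeg_eq_degree (v : V) : sdeg G v = G.degree v := by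
  rw [sdeg, ← card_neighborSet_eq_degree, ← Nat.card_eq_fintype_card, Nat.card_coe_set_eq]
  rfl

lemma sndMomDeg_eq :
    sndMomDeg V G = (Fintype.card V : ℝ)⁻¹ * ∑ v, (G.degree v : ℝ) ^ 2 := by
  simp only [sndMomDeg, sdeg_eq_degree]

variable {G}

lemma sum_three_mul_degree_sub_two (h : #G.edgeFinset + 1 = Fintype.card V) :
    ∑ v, (3 * (G.degree v : ℝ) - 2) = 4 * Fintype.card V - 6 := by
  have hdeg : ∑ v, (G.degree v : ℝ) = 2 * #G.edgeFinset := by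
    exact_mod_cast G.sum_degrees_eq_twice_card_edges
  have hcard : (#G.edgeFinset : ℝ) + 1 = Fintype.card V := by exact_mod_cast h
  rw [sum_sub_distrib, ← mul_sum, hdeg, sum_const, card_univ, nsmul_eq_mul]
  linarith

lemma four_mul_card_sub_six_le_sum_sq_degree (h : #G.edgeFinset + 1 = Fintype.card V) :
    4 * (Fintype.card V : ℝ) - 6 ≤ ∑ v, (G.degree v : ℝ) ^ 2 := by
  rw [← sum_three_mul_degree_sub_two h]
  gcongr with v
  rcases Nat.lt_or_ge (G.degree v) 2 with hd | hd
  · interval_cases G.degree v <;> norm_num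
  · have : (2 : ℝ) ≤ G.degree v := by exact_mod_cast hd
    nlinarith

lemma sum_sq_degree_eq_of_forall_degree_mem_Icc (h : #G.edgeFinset + 1 = Fintype.card V)
    (hdeg : ∀ v, G.degree v ∈ Set.Icc 1 2) :
    ∑ v, (G.degree v : ℝ) ^ 2 = 4 * Fintype.card V - 6 := by
  rw [← sum_three_mul_degree_sub_two h]
  refine sum_congr rfl fun v _ => ?_
  obtain ⟨h₁, h₂⟩ := hdeg v
  interval_cases G.degree v <;> norm_num

end DegreeMoment

lemma card_edgeSet_pathGraph (m : ℕ) : Nat.card (pathGraph (m + 1)).edgeSet = m := by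
  let f : Fin m → (pathGraph (m + 1)).edgeSet :=
    fun i => ⟨s(i.castSucc, i.succ), by simp [pathGraph_adj]⟩
  rw [← Nat.card_eq_of_bijective f ⟨fun i j hij => ?_, fun ⟨e, he⟩ => ?_⟩, Nat.card_fin]
  · simp only [f, Subtype.mk.injEq, Sym2.eq_iff, Fin.ext_iff, Fin.val_castSucc,
      Fin.val_succ] at hij
    exact Fin.ext (by omega)
  · induction e using Sym2.ind with
    | _ a b =>
      rw [mem_edgeSet, pathGraph_adj] at he
      rcases he with hab | hba
      · exact ⟨⟨a, by omega⟩, Subtype.ext (by simp [f, hab])⟩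
      · exact ⟨⟨b, by omega⟩, Subtype.ext (by simp [f, Fin.ext_iff, hba])⟩

lemma isTree_pathGraph (m : ℕ) : (pathGraph (m + 1)).IsTree := by
  rw [isTree_iff_connected_and_card, card_edgeSet_pathGraph, Nat.card_fin]
  exact ⟨pathGraph_connected m, rfl⟩

lemma degree_pathGraph_le_two {n : ℕ} (v : Fin n) [Fintype ((pathGraph n).neighborSet v)] :
    (pathGraph n).degree v ≤ 2 := by
  rw [← card_neighborFinset_eq_degree]
  calc #((pathGraph n).neighborFinset v)
      ≤ #({v.val - 1, v.val + 1} : Finset ℕ) :=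
        card_le_card_of_injOn Fin.val (fun w hw => by
          rw [mem_coe, mem_neighborFinset, pathGraph_adj] at hw
          simp only [coe_insert, coe_singleton, Set.mem_insert_iff, Set.mem_singleton_iff]
          omega) Fin.val_injective.injOn
    _ ≤ 2 := card_le_two

end SimpleGraph

/-- Among all undirected trees on `N ≥ 2` vertices, the second moment of the
degree distribution is minimized by the path graph, whose value is
`(4N - 6)/N`. -/
theorem stmt_17 :
    (∀ (V : Type) [Fintype V] (G : SimpleGraph V), G.IsTree →
      2 ≤ Fintype.card V →
      (4 * (Fintype.card V : ℝ) - 6) / (Fintype.card V : ℝ) ≤ sndMomDeg V G) ∧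
    (∀ N : ℕ, 2 ≤ N → (SimpleGraph.pathGraph N).IsTree ∧
      sndMomDeg (Fin N) (SimpleGraph.pathGraph N) = (4 * (N : ℝ) - 6) / (N : ℝ)) := by
  classical
  refine ⟨fun V _ G hG _ => ?_, fun N hN => ?_⟩
  · rw [SimpleGraph.sndMomDeg_eq, div_eq_inv_mul]
    gcongr
    exact SimpleGraph.four_mul_card_sub_six_le_sum_sq_degree hG.card_edgeFinset
  · obtain ⟨m, rfl⟩ : ∃ m, N = m + 1 := ⟨N - 1, by omega⟩
    have hTree := SimpleGraph.isTree_pathGraph m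
    have : Nontrivial (Fin (m + 1)) := Fin.nontrivial_iff_two_le.2 hN
    have hdeg (v : Fin (m + 1)) : (SimpleGraph.pathGraph (m + 1)).degree v ∈ Set.Icc 1 2 :=
      ⟨hTree.connected.preconnected.degree_pos_of_nontrivial v,
        SimpleGraph.degree_pathGraph_le_two v⟩
    refine ⟨hTree, ?_⟩
    rw [SimpleGraph.sndMomDeg_eq, Fintype.card_fin, div_eq_inv_mul,
      SimpleGraph.sum_sq_degree_eq_of_forall_degree_mem_Icc hTree.card_edgeFinset hdeg,
      Fintype.card_fin]
end
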